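/- Rawlsian assignments need not be rank efficient: for the 3-agent problem with ⪰₁ = ⪰₂ = (a,b,c), ⪰₃ = (b,a,c), the Rawlsian assignment x = [[1/2,1/6,1/3],[1/2,1/6,1/3],[0,2/3,1/3]] is rank-dominated by the deterministic assignment y = [[1,0,0],[0,0,1],[0,1,0]]: M^y(k) ≤ M^x(k) for all ranks k with strict inequality at k = 2, where M^z(k) = Σ_i b_i^z(k). -/

import Mathlib

open Finset

/-- An n×n matrix with nonnegative real entries whose rows and columns each sum to 1. -/
def Bistochastic {n : ℕ} (x : Fin n → Fin n → ℝ) : Prop :=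
  (∀ i o, 0 ≤ x i o) ∧ (∀ i, ∑ o, x i o = 1) ∧ (∀ o, ∑ i, x i o = 1)

/-- `tailProb rank x i k` = probability that agent `i` receives an object ranked `k`-th
or worse (ranks are 0-indexed: rank 0 = most preferred). -/
def tailProb {n : ℕ} (rank : Fin n → Fin n → Fin n) (x : Fin n → Fin n → ℝ)
    (i k : Fin n) : ℝ :=
  ∑ o ∈ Finset.univ.filter (fun o => k ≤ rank i o), x i o

/-- The values of `v` rearranged in non-increasing order. -/
noncomputable def sortedDesc {n : ℕ} (v : Fin n → ℝ) : Fin n → ℝ :=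
  fun j => v (Tuple.sort (fun i => -v i) j)

/-- Block `t` of `Bvec rank x` is the non-increasing rearrangement of the tail
probabilities at threshold `n-1-t`; so blocks run from the worst rank down. -/
noncomputable def Bvec {n : ℕ} (rank : Fin n → Fin n → Fin n) (x : Fin n → Fin n → ℝ) :
    Fin n → Fin n → ℝ :=
  fun t => sortedDesc (fun i => tailProb rank x i t.rev)

/-- Lexicographic strict order on doubly-indexed vectors (outer index first). -/
def BlockLexLt {α β : Type*} [LinearOrder α] [LinearOrder β] (u v : α → β → ℝ) : Prop :=
  ∃ t s, u t s < v t s ∧ ∀ t' s', (t' < t ∨ (t' = t ∧ s' < s)) → u t' s' = v t' s'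

/-- `x` Rawlsian-dominates `y`. -/
def RDom {n : ℕ} (rank : Fin n → Fin n → Fin n) (x y : Fin n → Fin n → ℝ) : Prop :=
  BlockLexLt (Bvec rank x) (Bvec rank y)

/-- A Rawlsian assignment: a bistochastic matrix not R-dominated by any other. -/
def Rawlsian {n : ℕ} (rank : Fin n → Fin n → Fin n) (x : Fin n → Fin n → ℝ) : Prop :=
  Bistochastic x ∧ ∀ y, Bistochastic y → ¬ RDom rank y x

/-- Ranks: agents 1 and 2 rank `a ≻ b ≻ c`; agent 3 ranks `b ≻ a ≻ c`. -/
def rank19 : Fin 3 → Fin 3 → Fin 3 := ![![0, 1, 2], ![0, 1, 2], ![1, 0, 2]]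

/-- The Rawlsian assignment of the problem. -/
noncomputable def x19 : Fin 3 → Fin 3 → ℝ :=
  ![![1 / 2, 1 / 6, 1 / 3], ![1 / 2, 1 / 6, 1 / 3], ![0, 2 / 3, 1 / 3]]

/-- The deterministic assignment that rank-dominates it. -/
noncomputable def y19 : Fin 3 → Fin 3 → ℝ := ![![1, 0, 0], ![0, 0, 1], ![0, 1, 0]]

/-- `M^z(k)`: expected number of agents receiving an object ranked `k`-th or worse
(0-indexed threshold). -/
noncomputable def M19 (z : Fin 3 → Fin 3 → ℝ) (k : Fin 3) : ℝ := ∑ i, tailProb rank19 z i k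


section Aux

lemma sd_anti {n : ℕ} (v : Fin n → ℝ) : Antitone (sortedDesc v) := by
  intro a b hab
  have := Tuple.monotone_sort (fun i => -v i) hab
  simpa [sortedDesc] using this

lemma sd_sum {n : ℕ} (v : Fin n → ℝ) : ∑ j, sortedDesc v j = ∑ i, v i :=
  Equiv.sum_comp (Tuple.sort (fun i => -v i)) v

lemma sd_symm {n : ℕ} (v : Fin n → ℝ) (i : Fin n) :
    sortedDesc v ((Tuple.sort (fun i => -v i)).symm i) = v i := by
  simp [sortedDesc]

lemma sd_mem {n : ℕ} (v : Fin n → ℝ) (j : Fin n) : ∃ i, sortedDesc v j = v i :=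
  ⟨_, rfl⟩

lemma le_sd_zero {n : ℕ} [NeZero n] (v : Fin n → ℝ) (i : Fin n) : v i ≤ sortedDesc v 0 := by
  rw [← sd_symm v i]; exact sd_anti v (Fin.zero_le _)

lemma sd_last_le {n : ℕ} (v : Fin (n+1) → ℝ) (i : Fin (n+1)) :
    sortedDesc v (Fin.last n) ≤ v i := by
  rw [← sd_symm v i]; exact sd_anti v (Fin.le_last _)

lemma sd_const_of_eq {n : ℕ} {v : Fin n → ℝ} {c : ℝ} (h : ∀ i, v i = c) (j : Fin n) :
    sortedDesc v j = c := by
  obtain ⟨i, hi⟩ := sd_mem v j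
  rw [hi, h]

lemma eq_of_sd_const {n : ℕ} {v : Fin n → ℝ} {c : ℝ}
    (h : ∀ j, sortedDesc v j = c) (i : Fin n) : v i = c := by
  rw [← sd_symm v i, h]

/- tail probability computations -/
lemma tp2 (y : Fin 3 → Fin 3 → ℝ) (i : Fin 3) : tailProb rank19 y i 2 = y i 2 := by
  fin_cases i <;>
    simp [tailProb, Finset.sum_filter, Fin.sum_univ_three, rank19, Fin.le_def]

lemma tp1_0 (y : Fin 3 → Fin 3 → ℝ) : tailProb rank19 y 0 1 = y 0 1 + y 0 2 := by
  simp [tailProb, Finset.sum_filter, Fin.sum_univ_three, rank19, Fin.le_def]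

lemma tp1_1 (y : Fin 3 → Fin 3 → ℝ) : tailProb rank19 y 1 1 = y 1 1 + y 1 2 := by
  simp [tailProb, Finset.sum_filter, Fin.sum_univ_three, rank19, Fin.le_def]

lemma tp1_2 (y : Fin 3 → Fin 3 → ℝ) : tailProb rank19 y 2 1 = y 2 0 + y 2 2 := by
  simp [tailProb, Finset.sum_filter, Fin.sum_univ_three, rank19, Fin.le_def]

lemma tp0 (y : Fin 3 → Fin 3 → ℝ) (i : Fin 3) :
    tailProb rank19 y i 0 = y i 0 + y i 1 + y i 2 := by
  fin_cases i <;>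
    simp [tailProb, Finset.sum_filter, Fin.sum_univ_three, rank19, Fin.le_def]

/- Bvec of x19 -/
lemma bx0 (s : Fin 3) : Bvec rank19 x19 0 s = 1/3 := by
  show sortedDesc (fun i => tailProb rank19 x19 i (Fin.rev 0)) s = 1/3
  refine sd_const_of_eq (fun i => ?_) s
  rw [show (Fin.rev 0 : Fin 3) = 2 from rfl, tp2]
  fin_cases i <;> norm_num [x19, Matrix.cons_val_two, Matrix.tail_cons, Matrix.head_cons]

lemma bx2 (z : Fin 3 → Fin 3 → ℝ) (hz : ∀ i, ∑ o, z i o = 1) (s : Fin 3) :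
    Bvec rank19 z 2 s = 1 := by
  show sortedDesc (fun i => tailProb rank19 z i (Fin.rev 2)) s = 1
  refine sd_const_of_eq (fun i => ?_) s
  rw [show (Fin.rev 2 : Fin 3) = 0 from rfl, tp0]
  have := hz i
  rw [Fin.sum_univ_three] at this
  linarith

lemma bx1 : Bvec rank19 x19 1 0 = 1/2 ∧ Bvec rank19 x19 1 1 = 1/2 ∧
    Bvec rank19 x19 1 2 = 1/3 := by
  set w : Fin 3 → ℝ := fun i => tailProb rank19 x19 i (Fin.rev 1) with hw
  have hb : ∀ s, Bvec rank19 x19 1 s = sortedDesc w s := fun _ => rfl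
  have hw0 : w 0 = 1/2 := by show tailProb rank19 x19 0 (Fin.rev 1) = 1/2; rw [show (Fin.rev 1 : Fin 3) = 1 from rfl, tp1_0]; norm_num [x19, Matrix.cons_val_two, Matrix.tail_cons, Matrix.head_cons]
  have hw1 : w 1 = 1/2 := by show tailProb rank19 x19 1 (Fin.rev 1) = 1/2; rw [show (Fin.rev 1 : Fin 3) = 1 from rfl, tp1_1]; norm_num [x19, Matrix.cons_val_two, Matrix.tail_cons, Matrix.head_cons]
  have hw2 : w 2 = 1/3 := by show tailProb rank19 x19 2 (Fin.rev 1) = 1/3; rw [show (Fin.rev 1 : Fin 3) = 1 from rfl, tp1_2, show x19 2 0 = 0 from rfl, show x19 2 2 = 1/3 from rfl]; norm_num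
  have hub : ∀ i, w i ≤ 1/2 := by intro i; fin_cases i <;> simp [hw0, hw1, hw2] <;> norm_num
  have hlb : ∀ i, 1/3 ≤ w i := by intro i; fin_cases i <;> simp [hw0, hw1, hw2] <;> norm_num
  have h0 : sortedDesc w 0 = 1/2 := by
    obtain ⟨i, hi⟩ := sd_mem w 0
    have := le_sd_zero w 0
    have := hub i
    rw [hw0] at *; linarith [hi ▸ this]
  have h2 : sortedDesc w 2 = 1/3 := by
    obtain ⟨i, hi⟩ := sd_mem w 2
    have h := sd_last_le w 2
    rw [show (2 : Fin 3) = Fin.last 2 from rfl] at hi ⊢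
    have := hlb i
    rw [hw2] at h
    linarith [hi ▸ this]
  have hsum : sortedDesc w 0 + sortedDesc w 1 + sortedDesc w 2 = w 0 + w 1 + w 2 := by
    have := sd_sum w
    rw [Fin.sum_univ_three, Fin.sum_univ_three] at this
    exact this
  have h1 : sortedDesc w 1 = 1/2 := by rw [hw0, hw1, hw2] at hsum; linarith
  exact ⟨by rw [hb, h0], by rw [hb, h1], by rw [hb, h2]⟩

end Aux

/-- The Rawlsian assignment `x19` is rank-dominated by `y19`: `M^y(k) ≤ M^x(k)` for
all `k`, strictly at the threshold "second-worst or worse" (0-indexed `1`). -/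
theorem rawlsian_not_rank_efficient :
    Rawlsian rank19 x19 ∧ (∀ k, M19 y19 k ≤ M19 x19 k) ∧ M19 y19 1 < M19 x19 1 := by
  obtain ⟨hx10, hx11, hx12⟩ := bx1
  have Mx0 : M19 x19 0 = 3 := by
    show ∑ i, tailProb rank19 x19 i 0 = 3
    rw [Fin.sum_univ_three, tp0, tp0, tp0, show x19 0 0 = 1/2 from rfl,
      show x19 0 1 = 1/6 from rfl, show x19 0 2 = 1/3 from rfl, show x19 1 0 = 1/2 from rfl,
      show x19 1 1 = 1/6 from rfl, show x19 1 2 = 1/3 from rfl, show x19 2 0 = 0 from rfl,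
      show x19 2 1 = 2/3 from rfl, show x19 2 2 = 1/3 from rfl]
    norm_num
  have Mx1 : M19 x19 1 = 4/3 := by
    show ∑ i, tailProb rank19 x19 i 1 = 4/3
    rw [Fin.sum_univ_three, tp1_0, tp1_1, tp1_2, show x19 0 1 = 1/6 from rfl,
      show x19 0 2 = 1/3 from rfl, show x19 1 1 = 1/6 from rfl, show x19 1 2 = 1/3 from rfl,
      show x19 2 0 = 0 from rfl, show x19 2 2 = 1/3 from rfl]
    norm_num
  have Mx2 : M19 x19 2 = 1 := by
    show ∑ i, tailProb rank19 x19 i 2 = 1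
    rw [Fin.sum_univ_three, tp2, tp2, tp2, show x19 0 2 = 1/3 from rfl,
      show x19 1 2 = 1/3 from rfl, show x19 2 2 = 1/3 from rfl]
    norm_num
  have My0 : M19 y19 0 = 3 := by
    show ∑ i, tailProb rank19 y19 i 0 = 3
    rw [Fin.sum_univ_three, tp0, tp0, tp0, show y19 0 0 = 1 from rfl,
      show y19 0 1 = 0 from rfl, show y19 0 2 = 0 from rfl, show y19 1 0 = 0 from rfl,
      show y19 1 1 = 0 from rfl, show y19 1 2 = 1 from rfl, show y19 2 0 = 0 from rfl,
      show y19 2 1 = 1 from rfl, show y19 2 2 = 0 from rfl]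
    norm_num
  have My1 : M19 y19 1 = 1 := by
    show ∑ i, tailProb rank19 y19 i 1 = 1
    rw [Fin.sum_univ_three, tp1_0, tp1_1, tp1_2, show y19 0 1 = 0 from rfl,
      show y19 0 2 = 0 from rfl, show y19 1 1 = 0 from rfl, show y19 1 2 = 1 from rfl,
      show y19 2 0 = 0 from rfl, show y19 2 2 = 0 from rfl]
    norm_num
  have My2 : M19 y19 2 = 1 := by
    show ∑ i, tailProb rank19 y19 i 2 = 1
    rw [Fin.sum_univ_three, tp2, tp2, tp2, show y19 0 2 = 0 from rfl,
      show y19 1 2 = 1 from rfl, show y19 2 2 = 0 from rfl]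
    norm_num
  refine ⟨⟨⟨?_, ?_, ?_⟩, ?_⟩, ?_, ?_⟩
  · intro i o; fin_cases i <;> fin_cases o <;> norm_num [x19]
  · have h0 : ∑ o, x19 0 o = 1 := by
      rw [Fin.sum_univ_three, show x19 0 0 = 1/2 from rfl, show x19 0 1 = 1/6 from rfl,
        show x19 0 2 = 1/3 from rfl]; norm_num
    have h1 : ∑ o, x19 1 o = 1 := by
      rw [Fin.sum_univ_three, show x19 1 0 = 1/2 from rfl, show x19 1 1 = 1/6 from rfl,
        show x19 1 2 = 1/3 from rfl]; norm_num
    have h2 : ∑ o, x19 2 o = 1 := by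
      rw [Fin.sum_univ_three, show x19 2 0 = 0 from rfl, show x19 2 1 = 2/3 from rfl,
        show x19 2 2 = 1/3 from rfl]; norm_num
    intro i; fin_cases i
    exacts [h0, h1, h2]
  · have h0 : ∑ i, x19 i 0 = 1 := by
      rw [Fin.sum_univ_three, show x19 0 0 = 1/2 from rfl, show x19 1 0 = 1/2 from rfl,
        show x19 2 0 = 0 from rfl]; norm_num
    have h1 : ∑ i, x19 i 1 = 1 := by
      rw [Fin.sum_univ_three, show x19 0 1 = 1/6 from rfl, show x19 1 1 = 1/6 from rfl,
        show x19 2 1 = 2/3 from rfl]; norm_num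
    have h2 : ∑ i, x19 i 2 = 1 := by
      rw [Fin.sum_univ_three, show x19 0 2 = 1/3 from rfl, show x19 1 2 = 1/3 from rfl,
        show x19 2 2 = 1/3 from rfl]; norm_num
    intro o; fin_cases o
    exacts [h0, h1, h2]
  · rintro y ⟨hnn, hrow, hcol⟩ ⟨t, s, hlt, heq⟩
    have hr0 := hrow 0; have hr1 := hrow 1; have hr2 := hrow 2
    rw [Fin.sum_univ_three] at hr0 hr1 hr2
    have hc0 := hcol 0; have hc2 := hcol 2
    rw [Fin.sum_univ_three] at hc0 hc2
    set u : Fin 3 → ℝ := fun i => tailProb rank19 y i (Fin.rev 0) with hu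
    have hbu : ∀ s', Bvec rank19 y 0 s' = sortedDesc u s' := fun _ => rfl
    have hu0 : u 0 = y 0 2 := by
      show tailProb rank19 y 0 (Fin.rev 0) = _
      rw [show (Fin.rev 0 : Fin 3) = 2 from rfl, tp2]
    have hu1 : u 1 = y 1 2 := by
      show tailProb rank19 y 1 (Fin.rev 0) = _
      rw [show (Fin.rev 0 : Fin 3) = 2 from rfl, tp2]
    have hu2 : u 2 = y 2 2 := by
      show tailProb rank19 y 2 (Fin.rev 0) = _
      rw [show (Fin.rev 0 : Fin 3) = 2 from rfl, tp2]
    have husum : sortedDesc u 0 + sortedDesc u 1 + sortedDesc u 2 = 1 := by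
      have := sd_sum u
      rw [Fin.sum_univ_three, Fin.sum_univ_three, hu0, hu1, hu2] at this
      linarith
    have hua : sortedDesc u 1 ≤ sortedDesc u 0 := sd_anti u (by decide)
    have hub : sortedDesc u 2 ≤ sortedDesc u 1 := sd_anti u (by decide)
    fin_cases t
    · -- t = 0
      fin_cases s
      · have H : Bvec rank19 y 0 0 < Bvec rank19 x19 0 0 := hlt
        rw [hbu, bx0] at H
        linarith
      · have H : Bvec rank19 y 0 1 < Bvec rank19 x19 0 1 := hlt
        have h0 : Bvec rank19 y 0 0 = Bvec rank19 x19 0 0 := heq 0 0 (Or.inr ⟨rfl, by decide⟩)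
        rw [hbu, bx0] at H h0
        linarith
      · have H : Bvec rank19 y 0 2 < Bvec rank19 x19 0 2 := hlt
        have h0 : Bvec rank19 y 0 0 = Bvec rank19 x19 0 0 := heq 0 0 (Or.inr ⟨rfl, by decide⟩)
        have h1 : Bvec rank19 y 0 1 = Bvec rank19 x19 0 1 := heq 0 1 (Or.inr ⟨rfl, by decide⟩)
        rw [hbu, bx0] at H h0 h1
        linarith
    · -- t = 1 : block 0 must be all 1/3
      have hall : ∀ s', sortedDesc u s' = 1/3 := by
        intro s'
        have h : Bvec rank19 y 0 s' = Bvec rank19 x19 0 s' := heq 0 s' (Or.inl (by decide))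
        rw [hbu, bx0] at h; exact h
      have hy02 : y 0 2 = 1/3 := by rw [← hu0]; exact eq_of_sd_const hall 0
      have hy12 : y 1 2 = 1/3 := by rw [← hu1]; exact eq_of_sd_const hall 1
      have hy22 : y 2 2 = 1/3 := by rw [← hu2]; exact eq_of_sd_const hall 2
      set T : Fin 3 → ℝ := fun i => tailProb rank19 y i (Fin.rev 1) with hT
      have hbT : ∀ s', Bvec rank19 y 1 s' = sortedDesc T s' := fun _ => rfl
      have hT0 : T 0 = y 0 1 + y 0 2 := by
        show tailProb rank19 y 0 (Fin.rev 1) = _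
        rw [show (Fin.rev 1 : Fin 3) = 1 from rfl, tp1_0]
      have hT1 : T 1 = y 1 1 + y 1 2 := by
        show tailProb rank19 y 1 (Fin.rev 1) = _
        rw [show (Fin.rev 1 : Fin 3) = 1 from rfl, tp1_1]
      have hT2 : T 2 = y 2 0 + y 2 2 := by
        show tailProb rank19 y 2 (Fin.rev 1) = _
        rw [show (Fin.rev 1 : Fin 3) = 1 from rfl, tp1_2]
      have hle0 : T 0 ≤ sortedDesc T 0 := le_sd_zero T 0
      have hle1 : T 1 ≤ sortedDesc T 0 := le_sd_zero T 1
      have hlast : sortedDesc T 2 ≤ T 2 := sd_last_le T 2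
      have hTa : sortedDesc T 1 ≤ sortedDesc T 0 := sd_anti T (by decide)
      have hTb : sortedDesc T 2 ≤ sortedDesc T 1 := sd_anti T (by decide)
      have hTsum : sortedDesc T 0 + sortedDesc T 1 + sortedDesc T 2 = T 0 + T 1 + T 2 := by
        have := sd_sum T
        rw [Fin.sum_univ_three, Fin.sum_univ_three] at this
        exact this
      have hT01 : 1 ≤ T 0 + T 1 := by
        have := hnn 2 0
        rw [hT0, hT1]; linarith
      fin_cases s
      · have H : Bvec rank19 y 1 0 < Bvec rank19 x19 1 0 := hlt
        rw [hbT, hx10] at H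
        linarith
      · have H : Bvec rank19 y 1 1 < Bvec rank19 x19 1 1 := hlt
        have h0 : Bvec rank19 y 1 0 = Bvec rank19 x19 1 0 := heq 1 0 (Or.inr ⟨rfl, by decide⟩)
        rw [hbT, hx10] at h0
        rw [hbT, hx11] at H
        have e0 : T 0 = 1/2 := by linarith
        have e1 : T 1 = 1/2 := by linarith
        have hy20 : y 2 0 = 0 := by
          have := hnn 2 0
          rw [hT0] at e0; rw [hT1] at e1
          linarith
        have e2 : T 2 = 1/3 := by rw [hT2, hy20, hy22]; norm_num
        linarith
      · have H : Bvec rank19 y 1 2 < Bvec rank19 x19 1 2 := hlt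
        have h0 : Bvec rank19 y 1 0 = Bvec rank19 x19 1 0 := heq 1 0 (Or.inr ⟨rfl, by decide⟩)
        have h1 : Bvec rank19 y 1 1 = Bvec rank19 x19 1 1 := heq 1 1 (Or.inr ⟨rfl, by decide⟩)
        rw [hbT, hx10] at h0
        rw [hbT, hx11] at h1
        rw [hbT, hx12] at H
        have e0 : T 0 = 1/2 := by linarith
        have e1 : T 1 = 1/2 := by linarith
        have hy20 : y 2 0 = 0 := by
          have := hnn 2 0
          rw [hT0] at e0; rw [hT1] at e1
          linarith
        have e2 : T 2 = 1/3 := by rw [hT2, hy20, hy22]; norm_num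
        linarith
    · -- t = 2
      have H : Bvec rank19 y 2 s < Bvec rank19 x19 2 s := hlt
      rw [bx2 y hrow, bx2 x19 (by
        intro i
        have h0 : ∑ o, x19 0 o = 1 := by
          rw [Fin.sum_univ_three, show x19 0 0 = 1/2 from rfl, show x19 0 1 = 1/6 from rfl,
            show x19 0 2 = 1/3 from rfl]; norm_num
        have h1 : ∑ o, x19 1 o = 1 := by
          rw [Fin.sum_univ_three, show x19 1 0 = 1/2 from rfl, show x19 1 1 = 1/6 from rfl,
            show x19 1 2 = 1/3 from rfl]; norm_num
        have h2 : ∑ o, x19 2 o = 1 := by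
          rw [Fin.sum_univ_three, show x19 2 0 = 0 from rfl, show x19 2 1 = 2/3 from rfl,
            show x19 2 2 = 1/3 from rfl]; norm_num
        fin_cases i
        exacts [h0, h1, h2])] at H
      exact lt_irrefl _ H
  · have k0 : M19 y19 0 ≤ M19 x19 0 := by rw [My0, Mx0]
    have k1 : M19 y19 1 ≤ M19 x19 1 := by rw [My1, Mx1]; norm_num
    have k2 : M19 y19 2 ≤ M19 x19 2 := by rw [My2, Mx2]
    intro k; fin_cases k
    exacts [k0, k1, k2]
  · rw [My1, Mx1]; norm_num
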